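/- arXiv:1212.5643 — 8 statements merged into one kernel-verified Lean document; each statement's English description precedes it below -/
import Mathlib

section
/- Let γ̂ : ℝ → ℂ be a function such that for every w ∈ ℝ the families (γ̂(w+2kπ))_{k∈ℤ} and (γ̂(w+4kπ))_{k∈ℤ} are summable, and D(w) := ∑_{k∈ℤ} γ̂(w+2kπ) is nonzero for every w. Let P : ℝ → ℂ be 4π-periodic with γ̂(w) = P(w) γ̂(w/2) for all w ∈ ℝ. Define Ŝ(w) = γ̂(w)/D(w). Then for every w: (i) the family (Ŝ(w+2kπ))_{k∈ℤ} is summable with ∑_{k∈ℤ} Ŝ(w+2kπ) = 1; (ii) the family (Ŝ(w+4kπ))_{k∈ℤ} is summable, and setting P_s(w) = ∑_{k∈ℤ} Ŝ(w+4kπ) one has P_s(w) = P(w)·D(w/2)/D(w); and (iii) Ŝ(w) = P_s(w)·Ŝ(w/2). -/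
/-!
The 2π-periodization `D` of `γ̂` is 2π-periodic, so dividing by it commutes with periodizing:
the 2π-periodization of `Ŝ = γ̂ / D` is `D w / D w = 1`, and its 4π-periodization is the
4π-periodization of `γ̂` divided by `D w`. The two-scale relation together with the
4π-periodicity of `P` turns `γ̂ (w + 4kπ)` into `P w · γ̂ (w/2 + 2kπ)`, so the 4π-periodization
of `γ̂` is `P w · D (w/2)`. The refinement equation for `Ŝ` is then a rearrangement.
-/

open Function Real

theorem periodic_tsum_int_translates {R α : Type*} [Ring R] [AddCommMonoid α] [TopologicalSpace α]
    (f : R → α) (T : R) : Periodic (fun w => ∑' k : ℤ, f (w + k * T)) T := fun w => by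
  simp only
  rw [← (Equiv.addRight (1 : ℤ)).tsum_eq (fun k : ℤ => f (w + k * T))]
  congr 1 with k
  rw [Equiv.coe_addRight, Int.cast_add, Int.cast_one, add_one_mul, add_right_comm, add_assoc]

theorem HasSum.div_periodic {R α : Type*} [Ring R] [DivisionRing α] [TopologicalSpace α]
    [IsTopologicalRing α] {f D : R → α} {T w : R} {a : α} (hD : Periodic D T)
    (h : HasSum (fun k : ℤ => f (w + k * T)) a) :
    HasSum (fun k : ℤ => f (w + k * T) / D (w + k * T)) (a / D w) := by
  simp only [hD.int_mul _ w]
  exact h.div_const (D w)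

theorem HasSum.of_refinement {K α : Type*} [Field K] [Semiring α] [TopologicalSpace α]
    [IsTopologicalSemiring α] {γ P : K → α} {c T w : K} {d : α} (hc : c ≠ 0)
    (hP : Periodic P (c * T)) (hγ : ∀ v, γ v = P v * γ (v / c))
    (h : HasSum (fun k : ℤ => γ (w / c + k * T)) d) :
    HasSum (fun k : ℤ => γ (w + k * (c * T))) (P w * d) := by
  have htranslate : ∀ k : ℤ, γ (w + k * (c * T)) = P w * γ (w / c + k * T) := fun k => by
    rw [hγ, hP.int_mul k w]
    congr 2
    field_simp
  simpa only [htranslate] using h.mul_left (P w)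

theorem interpolation_two_scale_symbol_general (γhat : ℝ → ℂ)
    (h2 : ∀ w : ℝ, Summable (fun k : ℤ => γhat (w + 2 * (k : ℝ) * Real.pi)))
    (D : ℝ → ℂ) (hD : ∀ w : ℝ, D w = ∑' k : ℤ, γhat (w + 2 * (k : ℝ) * Real.pi))
    (hDne : ∀ w : ℝ, D w ≠ 0)
    (P : ℝ → ℂ) (hPper : ∀ w : ℝ, P (w + 4 * Real.pi) = P w)
    (hPscale : ∀ w : ℝ, γhat w = P w * γhat (w / 2))
    (S : ℝ → ℂ) (hS : ∀ w : ℝ, S w = γhat w / D w)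
    (Ps : ℝ → ℂ) (hPs : ∀ w : ℝ, Ps w = ∑' k : ℤ, S (w + 4 * (k : ℝ) * Real.pi)) :
    ∀ w : ℝ,
      HasSum (fun k : ℤ => S (w + 2 * (k : ℝ) * Real.pi)) 1 ∧
      Summable (fun k : ℤ => S (w + 4 * (k : ℝ) * Real.pi)) ∧
      Ps w = P w * D (w / 2) / D w ∧
      S w = Ps w * S (w / 2) := by
  have h2π : ∀ x : ℝ, 2 * x * π = x * (2 * π) := fun x => by ring
  have h4π : ∀ x : ℝ, 4 * x * π = x * (2 * (2 * π)) := fun x => by ring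
  simp_rw [h2π] at h2 hD ⊢
  simp_rw [h4π] at hPs ⊢
  have hDper : Periodic D (2 * π) := by
    simpa only [← funext hD] using periodic_tsum_int_translates γhat (2 * π)
  have hPper' : Periodic P (2 * (2 * π)) := fun w => by rw [← hPper w]; ring_nf
  have hDsum : ∀ v, HasSum (fun k : ℤ => γhat (v + k * (2 * π))) (D v) :=
    fun v => hD v ▸ (h2 v).hasSum
  intro w
  have hS2 : HasSum (fun k : ℤ => S (w + k * (2 * π))) 1 := by
    simpa only [hS, div_self (hDne w)] using (hDsum w).div_periodic hDper
  have hS4 : HasSum (fun k : ℤ => S (w + k * (2 * (2 * π)))) (P w * D (w / 2) / D w) := by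
    simpa only [hS] using ((hDsum (w / 2)).of_refinement two_ne_zero hPper' hPscale).div_periodic
      (by simpa using hDper.nat_mul 2)
  have hPsw : Ps w = P w * D (w / 2) / D w := hPs w ▸ hS4.tsum_eq
  refine ⟨hS2, hS4.summable, hPsw, ?_⟩
  rw [hPsw, hS, hS, hPscale w]
  field_simp [hDne w, hDne (w / 2)]

/-- Proposition 1, equations (12)–(14): if the 2π- and 4π-periodizations of `γ̂`
are summable, `D w = ∑_k γ̂(w+2kπ)` never vanishes, `P` is 4π-periodic with
`γ̂(w) = P(w) γ̂(w/2)`, and `Ŝ(w) = γ̂(w)/D(w)`, then the 2π-periodization of `Ŝ` sums to `1`,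
its 4π-periodization `P_s` is summable with `P_s(w) = P(w)·D(w/2)/D(w)`, and
`Ŝ(w) = P_s(w)·Ŝ(w/2)`. -/
theorem interpolation_two_scale_symbol (γhat : ℝ → ℂ)
    (h2 : ∀ w : ℝ, Summable (fun k : ℤ => γhat (w + 2 * (k : ℝ) * Real.pi)))
    (h4 : ∀ w : ℝ, Summable (fun k : ℤ => γhat (w + 4 * (k : ℝ) * Real.pi)))
    (D : ℝ → ℂ) (hD : ∀ w : ℝ, D w = ∑' k : ℤ, γhat (w + 2 * (k : ℝ) * Real.pi))
    (hDne : ∀ w : ℝ, D w ≠ 0)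
    (P : ℝ → ℂ) (hPper : ∀ w : ℝ, P (w + 4 * Real.pi) = P w)
    (hPscale : ∀ w : ℝ, γhat w = P w * γhat (w / 2))
    (S : ℝ → ℂ) (hS : ∀ w : ℝ, S w = γhat w / D w)
    (Ps : ℝ → ℂ) (hPs : ∀ w : ℝ, Ps w = ∑' k : ℤ, S (w + 4 * (k : ℝ) * Real.pi)) :
    ∀ w : ℝ,
      HasSum (fun k : ℤ => S (w + 2 * (k : ℝ) * Real.pi)) 1 ∧
      Summable (fun k : ℤ => S (w + 4 * (k : ℝ) * Real.pi)) ∧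
      Ps w = P w * D (w / 2) / D w ∧
      S w = Ps w * S (w / 2) :=
  interpolation_two_scale_symbol_general γhat h2 D hD hDne P hPper hPscale S hS Ps hPs
end

section
/- Let γ ∈ L¹(ℝ) ∩ L²(ℝ) with continuous Fourier transform γ̂(w) = ∫_ℝ γ(x) e^{-iwx} dx, and let (a_n)_{n∈ℤ} be complex numbers. Assume: (i) for every w ∈ ℝ the double family (a_n γ(k/2 − n) e^{-iwk/2})_{(k,n)∈ℤ×ℤ} is summable; (ii) for every w ∈ ℝ the family (a_n e^{-iwn})_{n∈ℤ} is summable, with sum A(w); (iii) for every w ∈ ℝ the families (γ(k/2) e^{-iwk/2})_{k∈ℤ} and (γ̂(w+4kπ))_{k∈ℤ} are summable and the Poisson summation identity (1/2) ∑_{k∈ℤ} γ(k/2) e^{-iwk/2} = ∑_{k∈ℤ} γ̂(w+4kπ) holds. Define S(k/2) = ∑_{n∈ℤ} a_n γ(k/2 − n) for k ∈ ℤ. Then for every w ∈ ℝ the family (S(k/2) e^{-iwk/2})_{k∈ℤ} is summable and (1/2) ∑_{k∈ℤ} S(k/2) e^{-iwk/2} = A(w) · ∑_{k∈ℤ} γ̂(w+4kπ).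 -/
/-! The double series `∑_{k,n} a_n γ(k/2 - n) e^{-iwk/2}` is summed in two ways. Summing over `n`
first gives `∑_k S(k/2) e^{-iwk/2}`; the shear `k ↦ k + 2n` instead splits it into the product
`(∑_k γ(k/2) e^{-iwk/2}) · (∑_n a_n e^{-iwn})`, since `e^{-iw(k+2n)/2} = e^{-iwk/2} e^{-iwn}`.
The Poisson identity for `γ` then gives the claim. -/

open Complex

def Int.prodShear (m : ℤ) : ℤ × ℤ ≃ ℤ × ℤ where
  toFun p := (p.1 + m * p.2, p.2)
  invFun p := (p.1 - m * p.2, p.2)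
  left_inv p := by simp
  right_inv p := by simp

section StridedConvolution

variable {R : Type*} [NormedField R] (ψ : AddChar ℤ R) (m : ℤ)
  {c g : ℤ → R} {A G : R}

theorem tsum_stridedConv_mul_addChar_eq
    (hF : Summable fun p : ℤ × ℤ => c p.2 * g (p.1 - m * p.2) * ψ p.1)
    (hc : HasSum (fun n => c n * ψ (m * n)) A) (hg : HasSum (fun k => g k * ψ k) G) :
    ∑' p : ℤ × ℤ, c p.2 * g (p.1 - m * p.2) * ψ p.1 = G * A := by
  set F : ℤ × ℤ → R := fun p => c p.2 * g (p.1 - m * p.2) * ψ p.1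
  have hshear : F ∘ Int.prodShear m = fun p => g p.1 * ψ p.1 * (c p.2 * ψ (m * p.2)) := by
    funext p
    simp only [F, Function.comp_apply, Int.prodShear, Equiv.coe_fn_mk, add_sub_cancel_right,
      AddChar.map_add_eq_mul]
    ring
  exact (hg.mul_eq hc (hshear ▸ (Int.prodShear m).hasSum_iff.2 hF.hasSum)).symm

theorem hasSum_stridedConv_mul_addChar [CompleteSpace R]
    (hF : Summable fun p : ℤ × ℤ => c p.2 * g (p.1 - m * p.2) * ψ p.1)
    (hc : HasSum (fun n => c n * ψ (m * n)) A) (hg : HasSum (fun k => g k * ψ k) G) :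
    HasSum (fun k => (∑' n, c n * g (k - m * n)) * ψ k) (G * A) := by
  rw [← tsum_stridedConv_mul_addChar_eq ψ m hF hc hg]
  refine hF.hasSum.prod_fiberwise fun k => ?_
  simpa only [tsum_mul_right] using (hF.prod_factor k).hasSum

end StridedConvolution

noncomputable def halfFourierChar (w : ℝ) : AddChar ℤ ℂ where
  toFun k := exp (-I * w * k / 2)
  map_zero_eq_one' := by simp
  map_add_eq_mul' j k := by push_cast; rw [← exp_add]; ring_nf

theorem halfFourierChar_apply (w : ℝ) (k : ℤ) : halfFourierChar w k = exp (-I * w * k / 2) := rfl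

theorem poisson_transfer_to_interpolation_function_general (γ : ℝ → ℂ) (γhat : ℝ → ℂ)
    (a : ℤ → ℂ) (A : ℝ → ℂ) (S : ℤ → ℂ)
    (h1 : ∀ w : ℝ, Summable (fun p : ℤ × ℤ =>
      a p.2 * γ ((p.1 : ℝ) / 2 - (p.2 : ℝ)) *
        Complex.exp (-Complex.I * (w : ℂ) * (p.1 : ℂ) / 2)))
    (h2 : ∀ w : ℝ, HasSum (fun n : ℤ => a n * Complex.exp (-Complex.I * (w : ℂ) * (n : ℂ))) (A w))
    (h3 : ∀ w : ℝ,
      Summable (fun k : ℤ =>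
        γ ((k : ℝ) / 2) * Complex.exp (-Complex.I * (w : ℂ) * (k : ℂ) / 2)) ∧
      Summable (fun k : ℤ => γhat (w + 4 * (k : ℝ) * Real.pi)) ∧
      (1 / 2 : ℂ) * ∑' k : ℤ, γ ((k : ℝ) / 2) * Complex.exp (-Complex.I * (w : ℂ) * (k : ℂ) / 2) =
        ∑' k : ℤ, γhat (w + 4 * (k : ℝ) * Real.pi))
    (hS : ∀ k : ℤ, S k = ∑' n : ℤ, a n * γ ((k : ℝ) / 2 - (n : ℝ))) :
    ∀ w : ℝ,
      Summable (fun k : ℤ => S k * Complex.exp (-Complex.I * (w : ℂ) * (k : ℂ) / 2)) ∧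
      (1 / 2 : ℂ) * ∑' k : ℤ, S k * Complex.exp (-Complex.I * (w : ℂ) * (k : ℂ) / 2) =
        A w * ∑' k : ℤ, γhat (w + 4 * (k : ℝ) * Real.pi) := by
  intro w
  obtain ⟨hγ_summable, -, hpoisson⟩ := h3 w
  have hhalf : ∀ k n : ℤ, γ (((k - 2 * n : ℤ) : ℝ) / 2) = γ ((k : ℝ) / 2 - n) := by
    intro k n; push_cast; ring_nf
  have hchar : ∀ n : ℤ, halfFourierChar w (2 * n) = exp (-I * w * n) := by
    intro n; rw [halfFourierChar_apply]; push_cast; ring_nf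
  have hS_series := hasSum_stridedConv_mul_addChar (halfFourierChar w) 2
    (g := fun j => γ ((j : ℝ) / 2)) (by simpa only [hhalf, halfFourierChar_apply] using h1 w)
    (by simpa only [hchar] using h2 w)
    (by simpa only [halfFourierChar_apply] using hγ_summable.hasSum)
  simp only [hhalf, ← hS, halfFourierChar_apply] at hS_series
  refine ⟨hS_series.summable, ?_⟩
  rw [hS_series.tsum_eq, ← hpoisson]
  ring

/-- Appendix A, (A7)–(A12): transfer of the Poisson summation formula from a
generator `γ` to `S = ∑_n a_n γ(· − n)`: under the stated summability hypotheses,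
`(1/2) ∑_k S(k/2) e^{-iwk/2} = A(w) · ∑_k γ̂(w+4kπ)` where `A(w) = ∑_n a_n e^{-iwn}`. -/
theorem poisson_transfer_to_interpolation_function (γ : ℝ → ℂ) (γhat : ℝ → ℂ)
    (a : ℤ → ℂ) (A : ℝ → ℂ) (S : ℤ → ℂ)
    (hγ1 : MeasureTheory.Integrable γ)
    (hγ2 : MeasureTheory.MemLp γ 2)
    (hγhat : ∀ w : ℝ, γhat w = ∫ x : ℝ, γ x * Complex.exp (-Complex.I * (w : ℂ) * (x : ℂ)))
    (hcont : Continuous γhat)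
    (h1 : ∀ w : ℝ, Summable (fun p : ℤ × ℤ =>
      a p.2 * γ ((p.1 : ℝ) / 2 - (p.2 : ℝ)) *
        Complex.exp (-Complex.I * (w : ℂ) * (p.1 : ℂ) / 2)))
    (h2 : ∀ w : ℝ, HasSum (fun n : ℤ => a n * Complex.exp (-Complex.I * (w : ℂ) * (n : ℂ))) (A w))
    (h3 : ∀ w : ℝ,
      Summable (fun k : ℤ =>
        γ ((k : ℝ) / 2) * Complex.exp (-Complex.I * (w : ℂ) * (k : ℂ) / 2)) ∧
      Summable (fun k : ℤ => γhat (w + 4 * (k : ℝ) * Real.pi)) ∧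
      (1 / 2 : ℂ) * ∑' k : ℤ, γ ((k : ℝ) / 2) * Complex.exp (-Complex.I * (w : ℂ) * (k : ℂ) / 2) =
        ∑' k : ℤ, γhat (w + 4 * (k : ℝ) * Real.pi))
    (hS : ∀ k : ℤ, S k = ∑' n : ℤ, a n * γ ((k : ℝ) / 2 - (n : ℝ))) :
    ∀ w : ℝ,
      Summable (fun k : ℤ => S k * Complex.exp (-Complex.I * (w : ℂ) * (k : ℂ) / 2)) ∧
      (1 / 2 : ℂ) * ∑' k : ℤ, S k * Complex.exp (-Complex.I * (w : ℂ) * (k : ℂ) / 2) =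
        A w * ∑' k : ℤ, γhat (w + 4 * (k : ℝ) * Real.pi) :=
  poisson_transfer_to_interpolation_function_general γ γhat a A S h1 h2 h3 hS
end

section
/- Let P, Q, E : ℝ → ℂ be functions satisfying, for every w ∈ ℝ: P(w) + P(w+2π) = 1; e^{iw/2}(Q(w) − Q(w+2π)) = 1; and Q(w) E(w) conj(P(w)) + Q(w+2π) E(w+2π) conj(P(w+2π)) = 0. Define Δ(w) = P(w) Q(w+2π) − P(w+2π) Q(w). Then for every w ∈ ℝ: Δ(w) · ( E(w+2π) conj(P(w+2π)) + E(w) conj(P(w)) ) = −e^{-iw/2} · ( E(w+2π) |P(w+2π)|² + E(w) |P(w)|² ). -/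
/-!
With `p, p', q, q', e, e'` the values of `P, Q, E` at `w` and `w + 2π`, one has the ring identity
`(p q' - p' q)(e' p̄' + e p̄) + (q - q')(e' p' p̄' + e p p̄) = (p - p')(q e p̄ + q' e' p̄')`,
whose right side vanishes by the orthogonality relation. It remains to insert
`q - q' = e^{-iw/2}` and `p p̄ = |p|²`.
-/

theorem det_mul_sum_eq_neg_mul_sum {R : Type*} [CommRing R] {p p' q q' e e' c c' z : R}
    (hq : q - q' = z) (horth : q * e * c + q' * e' * c' = 0) :
    (p * q' - p' * q) * (e' * c' + e * c) = -z * (e' * (p' * c') + e * (p * c)) := by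
  linear_combination (p - p') * horth - (e' * p' * c' + e * p * c) * hq

theorem Complex.eq_exp_neg_of_exp_mul_eq_one {a x : ℂ} (h : Complex.exp a * x = 1) :
    x = Complex.exp (-a) := by
  rw [Complex.exp_neg]
  exact eq_inv_of_mul_eq_one_right h

theorem Complex.mul_conj_eq_ofReal_norm_sq (z : ℂ) :
    z * (starRingEnd ℂ) z = ((‖z‖ ^ 2 : ℝ) : ℂ) := by
  rw [Complex.mul_conj']
  push_cast
  rfl

theorem determinant_identity_general (P Q E : ℝ → ℂ)
    (hQ : ∀ w : ℝ,
      Complex.exp (Complex.I * (w : ℂ) / 2) * (Q w - Q (w + 2 * Real.pi)) = 1)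
    (horth : ∀ w : ℝ,
      Q w * E w * (starRingEnd ℂ) (P w) +
        Q (w + 2 * Real.pi) * E (w + 2 * Real.pi) *
          (starRingEnd ℂ) (P (w + 2 * Real.pi)) = 0)
    (Δ : ℝ → ℂ)
    (hΔ : ∀ w : ℝ, Δ w = P w * Q (w + 2 * Real.pi) - P (w + 2 * Real.pi) * Q w) :
    ∀ w : ℝ,
      Δ w * (E (w + 2 * Real.pi) * (starRingEnd ℂ) (P (w + 2 * Real.pi)) +
          E w * (starRingEnd ℂ) (P w)) =
        -Complex.exp (-Complex.I * (w : ℂ) / 2) *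
          (E (w + 2 * Real.pi) * (‖P (w + 2 * Real.pi)‖ ^ 2 : ℝ) +
            E w * (‖P w‖ ^ 2 : ℝ)) := by
  intro w
  have hQ' : Q w - Q (w + 2 * Real.pi) = Complex.exp (-Complex.I * (w : ℂ) / 2) := by
    rw [neg_mul, neg_div]
    exact Complex.eq_exp_neg_of_exp_mul_eq_one (hQ w)
  rw [hΔ w, ← Complex.mul_conj_eq_ofReal_norm_sq, ← Complex.mul_conj_eq_ofReal_norm_sq]
  exact det_mul_sum_eq_neg_mul_sum hQ' (horth w)

/-- equations (F13)/(F15): if `P(w)+P(w+2π)=1`, `e^{iw/2}(Q(w)−Q(w+2π))=1` and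
`Q(w)E(w)conj(P(w)) + Q(w+2π)E(w+2π)conj(P(w+2π)) = 0` for every `w`, then with
`Δ(w) = P(w)Q(w+2π) − P(w+2π)Q(w)` one has
`Δ(w)·(E(w+2π)conj(P(w+2π)) + E(w)conj(P(w))) = −e^{-iw/2}·(E(w+2π)|P(w+2π)|² + E(w)|P(w)|²)`. -/
theorem determinant_identity (P Q E : ℝ → ℂ)
    (hP : ∀ w : ℝ, P w + P (w + 2 * Real.pi) = 1)
    (hQ : ∀ w : ℝ,
      Complex.exp (Complex.I * (w : ℂ) / 2) * (Q w - Q (w + 2 * Real.pi)) = 1)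
    (horth : ∀ w : ℝ,
      Q w * E w * (starRingEnd ℂ) (P w) +
        Q (w + 2 * Real.pi) * E (w + 2 * Real.pi) *
          (starRingEnd ℂ) (P (w + 2 * Real.pi)) = 0)
    (Δ : ℝ → ℂ)
    (hΔ : ∀ w : ℝ, Δ w = P w * Q (w + 2 * Real.pi) - P (w + 2 * Real.pi) * Q w) :
    ∀ w : ℝ,
      Δ w * (E (w + 2 * Real.pi) * (starRingEnd ℂ) (P (w + 2 * Real.pi)) +
          E w * (starRingEnd ℂ) (P w)) =
        -Complex.exp (-Complex.I * (w : ℂ) / 2) *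
          (E (w + 2 * Real.pi) * (‖P (w + 2 * Real.pi)‖ ^ 2 : ℝ) +
            E w * (‖P w‖ ^ 2 : ℝ)) :=
  determinant_identity_general P Q E hQ horth Δ hΔ
end

section
/- Let P, Q, E : ℝ → ℂ be functions satisfying, for every w ∈ ℝ: P(w) + P(w+2π) = 1; e^{iw/2}(Q(w) − Q(w+2π)) = 1; Q(w) E(w) conj(P(w)) + Q(w+2π) E(w+2π) conj(P(w+2π)) = 0. Define Δ(w) = P(w) Q(w+2π) − P(w+2π) Q(w). Suppose there exist constants 0 < A_Δ ≤ B_Δ < ∞ and 0 < A_E ≤ B_E < ∞ such that for every w: A_Δ ≤ |Δ(w)|² ≤ B_Δ and A_E ≤ |E(w+2π)|P(w+2π)|² + E(w)|P(w)|²| ≤ B_E. Then for every w ∈ ℝ: A_E²/B_Δ ≤ |E(w+2π) conj(P(w+2π)) + E(w) conj(P(w))|² ≤ B_E²/A_Δ. -/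
/-! The orthogonality relation makes `PE · Δ = (Q(w+2π) − Q(w)) · (E(w+2π)|P(w+2π)|² + E(w)|P(w)|²)`,
and `|Q(w+2π) − Q(w)| = 1` because it is the reciprocal of a unimodular exponential. Hence
`|PE|² = |E(w+2π)|P(w+2π)|² + E(w)|P(w)|²|² / |Δ|²`, and the two-sided bounds on numerator and
denominator give the claim. -/

open Complex

theorem mul_det_eq_sub_mul_of_orthogonal {R : Type*} [CommRing R] (p p' q q' e e' c c' : R)
    (horth : q * e * c + q' * e' * c' = 0) :
    (e' * c' + e * c) * (p * q' - p' * q) = (q' - q) * (e' * (p' * c') + e * (p * c)) := by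
  linear_combination (p - p') * horth

theorem norm_eq_one_of_cexp_I_mul_div_two_mul_eq_one {w : ℝ} {z : ℂ}
    (h : cexp (I * w / 2) * z = 1) : ‖z‖ = 1 := by
  have hunit : ‖cexp (I * w / 2)‖ = 1 := by
    rw [norm_exp]
    simp
  simpa [hunit] using congrArg norm h

theorem sq_bounds_of_mul_eq {s d t a b A B : ℝ} (hsdt : s * d = t) (hA : 0 < A)
    (hd : A ≤ d ^ 2 ∧ d ^ 2 ≤ B) (ha : 0 ≤ a) (ht : a ≤ t ∧ t ≤ b) :
    a ^ 2 / B ≤ s ^ 2 ∧ s ^ 2 ≤ b ^ 2 / A := by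
  obtain ⟨hAd, hdB⟩ := hd
  obtain ⟨hat, htb⟩ := ht
  have hd2 : 0 < d ^ 2 := hA.trans_le hAd
  have hs : s ^ 2 = t ^ 2 / d ^ 2 := by
    rw [eq_div_iff hd2.ne', ← mul_pow, hsdt]
  rw [hs]
  constructor
  · exact div_le_div₀ (sq_nonneg t) (pow_le_pow_left₀ ha hat 2) hd2 hdB
  · exact div_le_div₀ (sq_nonneg b) (pow_le_pow_left₀ (ha.trans hat) htb 2) hA hAd

theorem PE_two_sided_bound_general (P Q E : ℝ → ℂ)
    (hQ : ∀ w : ℝ,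
      Complex.exp (Complex.I * (w : ℂ) / 2) * (Q w - Q (w + 2 * Real.pi)) = 1)
    (horth : ∀ w : ℝ,
      Q w * E w * (starRingEnd ℂ) (P w) +
        Q (w + 2 * Real.pi) * E (w + 2 * Real.pi) *
          (starRingEnd ℂ) (P (w + 2 * Real.pi)) = 0)
    (Δ : ℝ → ℂ)
    (hΔ : ∀ w : ℝ, Δ w = P w * Q (w + 2 * Real.pi) - P (w + 2 * Real.pi) * Q w)
    (AΔ BΔ AE BE : ℝ)
    (hAΔ : 0 < AΔ)
    (hAE : 0 < AE)
    (hΔbound : ∀ w : ℝ, AΔ ≤ ‖Δ w‖ ^ 2 ∧ ‖Δ w‖ ^ 2 ≤ BΔ)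
    (hEbound : ∀ w : ℝ,
      AE ≤ ‖E (w + 2 * Real.pi) * (‖P (w + 2 * Real.pi)‖ ^ 2 : ℝ) +
            E w * (‖P w‖ ^ 2 : ℝ)‖ ∧
      ‖E (w + 2 * Real.pi) * (‖P (w + 2 * Real.pi)‖ ^ 2 : ℝ) +
            E w * (‖P w‖ ^ 2 : ℝ)‖ ≤ BE) :
    ∀ w : ℝ,
      AE ^ 2 / BΔ ≤
        ‖E (w + 2 * Real.pi) * (starRingEnd ℂ) (P (w + 2 * Real.pi)) +
          E w * (starRingEnd ℂ) (P w)‖ ^ 2 ∧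
      ‖E (w + 2 * Real.pi) * (starRingEnd ℂ) (P (w + 2 * Real.pi)) +
          E w * (starRingEnd ℂ) (P w)‖ ^ 2 ≤ BE ^ 2 / AΔ := by
  intro w
  have hdiff : ‖Q (w + 2 * Real.pi) - Q w‖ = 1 := by
    rw [norm_sub_rev]
    exact norm_eq_one_of_cexp_I_mul_div_two_mul_eq_one (hQ w)
  have hkey := mul_det_eq_sub_mul_of_orthogonal (P w) (P (w + 2 * Real.pi)) (Q w)
    (Q (w + 2 * Real.pi)) (E w) (E (w + 2 * Real.pi)) _ _ (horth w)
  simp only [mul_conj', ← hΔ w] at hkey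
  have hnorm := congrArg norm hkey
  rw [norm_mul, norm_mul, hdiff, one_mul] at hnorm
  push_cast at hEbound
  exact sq_bounds_of_mul_eq hnorm hAΔ (hΔbound w) hAE.le (hEbound w)

/-- bound (F18), i.e. equation (23): under the reconstruction-filter identities
and the two-sided bounds `A_Δ ≤ |Δ(w)|² ≤ B_Δ` and
`A_E ≤ |E(w+2π)|P(w+2π)|² + E(w)|P(w)|²| ≤ B_E`, one has
`A_E²/B_Δ ≤ |E(w+2π)conj(P(w+2π)) + E(w)conj(P(w))|² ≤ B_E²/A_Δ` for every `w`. -/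
theorem PE_two_sided_bound (P Q E : ℝ → ℂ)
    (hP : ∀ w : ℝ, P w + P (w + 2 * Real.pi) = 1)
    (hQ : ∀ w : ℝ,
      Complex.exp (Complex.I * (w : ℂ) / 2) * (Q w - Q (w + 2 * Real.pi)) = 1)
    (horth : ∀ w : ℝ,
      Q w * E w * (starRingEnd ℂ) (P w) +
        Q (w + 2 * Real.pi) * E (w + 2 * Real.pi) *
          (starRingEnd ℂ) (P (w + 2 * Real.pi)) = 0)
    (Δ : ℝ → ℂ)
    (hΔ : ∀ w : ℝ, Δ w = P w * Q (w + 2 * Real.pi) - P (w + 2 * Real.pi) * Q w)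
    (AΔ BΔ AE BE : ℝ)
    (hAΔ : 0 < AΔ) (hΔB : AΔ ≤ BΔ)
    (hAE : 0 < AE) (hEB : AE ≤ BE)
    (hΔbound : ∀ w : ℝ, AΔ ≤ ‖Δ w‖ ^ 2 ∧ ‖Δ w‖ ^ 2 ≤ BΔ)
    (hEbound : ∀ w : ℝ,
      AE ≤ ‖E (w + 2 * Real.pi) * (‖P (w + 2 * Real.pi)‖ ^ 2 : ℝ) +
            E w * (‖P w‖ ^ 2 : ℝ)‖ ∧
      ‖E (w + 2 * Real.pi) * (‖P (w + 2 * Real.pi)‖ ^ 2 : ℝ) +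
            E w * (‖P w‖ ^ 2 : ℝ)‖ ≤ BE) :
    ∀ w : ℝ,
      AE ^ 2 / BΔ ≤
        ‖E (w + 2 * Real.pi) * (starRingEnd ℂ) (P (w + 2 * Real.pi)) +
          E w * (starRingEnd ℂ) (P w)‖ ^ 2 ∧
      ‖E (w + 2 * Real.pi) * (starRingEnd ℂ) (P (w + 2 * Real.pi)) +
          E w * (starRingEnd ℂ) (P w)‖ ^ 2 ≤ BE ^ 2 / AΔ :=
  PE_two_sided_bound_general P Q E hQ horth Δ hΔ AΔ BΔ AE BE hAΔ hAE hΔbound hEbound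
end

section
/- For every real x with x ∉ πℤ, the family ( sin⁴(x) / (x + kπ)⁴ )_{k∈ℤ} is summable and ∑_{k∈ℤ} sin⁴(x)/(x+kπ)⁴ = (2 + cos(2x))/3 = (2cos²(x) + 1)/3. -/
/-!
Let `g(t) = (t + (1 - t) e^{iθ}) e^{iθt}` on `(0, 1]`: it is the circular self-convolution of
`t ↦ e^{iθt}`, so its Fourier coefficients are the squares `(e^{iθ} - 1)² / (i(θ - 2πn))²` of
those of the exponential, with squared moduli `sin⁴(θ/2) / (θ/2 - πn)⁴`. Parseval's identity turns
`∑ₙ |ĝ(n)|²` into `∫₀¹ |g|² = ∫₀¹ (t² + (1 - t)² + 2t(1 - t) cos θ) dt = (2 + cos θ)/3`;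
take `θ = 2x`.
-/

open Complex MeasureTheory Set
open scoped Real

theorem integral_linear_mul_cexp (a b c : ℂ) (hc : c ≠ 0) :
    ∫ t in (0:ℝ)..1, (a * t + b) * cexp (c * t)
      = (a / c + (b * c - a) / c ^ 2) * cexp c - (b * c - a) / c ^ 2 := by
  have hderiv : ∀ t ∈ uIcc (0:ℝ) 1, HasDerivAt
      (fun s : ℝ => (a / c * s + (b * c - a) / c ^ 2) * cexp (c * s))
      ((a * t + b) * cexp (c * t)) t := by
    intro t _
    have hlin : HasDerivAt (fun s : ℂ => a / c * s + (b * c - a) / c ^ 2) (a / c) t := by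
      simpa using ((hasDerivAt_id (t : ℂ)).const_mul (a / c)).add_const ((b * c - a) / c ^ 2)
    have hexp : HasDerivAt (fun s : ℂ => cexp (c * s)) (cexp (c * t) * c) t := by
      simpa using ((hasDerivAt_id (t : ℂ)).const_mul c).cexp
    refine ((hlin.mul hexp).comp_ofReal (z := t)).congr_deriv ?_
    field_simp
    ring
  rw [intervalIntegral.integral_eq_sub_of_hasDerivAt hderiv
    (Continuous.intervalIntegrable (by fun_prop) _ _)]
  simp

theorem norm_exp_I_mul_ofReal_mul_ofReal (θ t : ℝ) : ‖cexp (I * θ * t)‖ = 1 := by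
  rw [mul_assoc, ← ofReal_mul, norm_exp_I_mul_ofReal]

theorem norm_sq_div_sq_cexp_I_mul_sub_one (θ φ : ℝ) :
    ‖(cexp (I * θ) - 1) ^ 2 / (I * φ) ^ 2‖ ^ 2 = Real.sin (θ / 2) ^ 4 / (φ / 2) ^ 4 := by
  simp only [norm_div, norm_pow, norm_exp_I_mul_ofReal_sub_one, norm_mul, norm_I, one_mul,
    norm_real, Real.norm_eq_abs]
  rw [abs_two, mul_pow, sq_abs, sq_abs]
  ring

noncomputable def expSelfConv (θ t : ℝ) : ℂ :=
  (t + (1 - t) * cexp (I * θ)) * cexp (I * θ * t)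

theorem norm_expSelfConv_le_one (θ : ℝ) {t : ℝ} (ht : t ∈ Icc (0:ℝ) 1) :
    ‖expSelfConv θ t‖ ≤ 1 := by
  rw [expSelfConv, norm_mul, norm_exp_I_mul_ofReal_mul_ofReal, mul_one]
  calc ‖(t : ℂ) + (1 - t) * cexp (I * θ)‖ ≤ ‖(t : ℂ)‖ + ‖((1 - t : ℝ) : ℂ)‖ := by
        refine (norm_add_le _ _).trans_eq ?_
        rw [norm_mul, norm_exp_I_mul_ofReal, mul_one, ofReal_sub, ofReal_one]
    _ = 1 := by
        rw [norm_real, norm_real, Real.norm_of_nonneg ht.1, Real.norm_of_nonneg (by linarith [ht.2])]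
        ring

theorem memLp_expSelfConv (θ : ℝ) : MemLp (expSelfConv θ) 2 (volume.restrict (Ioc 0 1)) :=
  MemLp.of_bound (Continuous.aestronglyMeasurable (by unfold expSelfConv; fun_prop)) 1
    (ae_restrict_of_forall_mem measurableSet_Ioc fun _ ht ↦
      norm_expSelfConv_le_one θ (Ioc_subset_Icc_self ht))

theorem norm_sq_expSelfConv (θ t : ℝ) :
    ‖expSelfConv θ t‖ ^ 2 = t ^ 2 + (1 - t) ^ 2 + 2 * t * (1 - t) * Real.cos θ := by
  rw [expSelfConv, norm_mul, norm_exp_I_mul_ofReal_mul_ofReal, mul_one, mul_comm I, exp_mul_I,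
    ← ofReal_cos, ← ofReal_sin]
  rw [show (t : ℂ) + (1 - t) * (Real.cos θ + Real.sin θ * I)
      = ((t + (1 - t) * Real.cos θ : ℝ) : ℂ) + ((1 - t) * Real.sin θ : ℝ) * I by push_cast; ring,
    Complex.sq_norm, normSq_add_mul_I]
  linear_combination (1 - t) ^ 2 * Real.sin_sq_add_cos_sq θ

theorem integral_norm_sq_expSelfConv (θ : ℝ) :
    ∫ t in (0:ℝ)..1, ‖expSelfConv θ t‖ ^ 2 = (2 + Real.cos θ) / 3 := by
  have hpoly (t : ℝ) : ‖expSelfConv θ t‖ ^ 2 = 1 + (2 - 2 * Real.cos θ) * (t ^ 2 - t) := by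
    rw [norm_sq_expSelfConv]; ring
  simp_rw [hpoly]
  rw [intervalIntegral.integral_add intervalIntegrable_const
      (Continuous.intervalIntegrable (by fun_prop) _ _), intervalIntegral.integral_const_mul,
    intervalIntegral.integral_sub (Continuous.intervalIntegrable (by fun_prop) _ _)
      (Continuous.intervalIntegrable (by fun_prop) _ _)]
  simp
  ring

theorem fourierCoeffOn_expSelfConv (θ : ℝ) (n : ℤ) (hθ : θ ≠ 2 * π * n) :
    fourierCoeffOn zero_lt_one (expSelfConv θ) n
      = (cexp (I * θ) - 1) ^ 2 / (I * (θ - 2 * π * n : ℝ)) ^ 2 := by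
  set β := cexp (I * θ)
  set c : ℂ := I * (θ - 2 * π * n : ℝ)
  have hc : c ≠ 0 := mul_ne_zero I_ne_zero (ofReal_ne_zero.2 (sub_ne_zero.2 hθ))
  have hβ : cexp c = β := by
    rw [show c = I * θ + (-n : ℤ) * (2 * π * I) by push_cast [c]; ring, Complex.exp_add,
      exp_int_mul_two_pi_mul_I, mul_one]
  have hintegrand (t : ℝ) : fourier (-n) (t : AddCircle ((1:ℝ) - 0)) • expSelfConv θ t
      = ((1 - β) * t + β) * cexp (c * t) := by
    rw [fourier_coe_apply, expSelfConv, smul_eq_mul, mul_left_comm, ← Complex.exp_add]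
    push_cast [c, β]
    ring_nf
  rw [fourierCoeffOn_eq_integral]
  simp_rw [hintegrand]
  rw [sub_zero, div_one, one_smul, integral_linear_mul_cexp _ _ _ hc, hβ]
  field_simp
  ring

/-- equation (69)/(60): for `x ∉ πℤ`,
`∑_{k∈ℤ} sin⁴(x)/(x+kπ)⁴ = (2 + cos(2x))/3 = (2cos²(x)+1)/3`. -/
theorem sum_sin_pow_four_div_shifted (x : ℝ) (hx : ∀ k : ℤ, x ≠ (k : ℝ) * Real.pi) :
    HasSum (fun k : ℤ => Real.sin x ^ 4 / (x + (k : ℝ) * Real.pi) ^ 4)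
      ((2 + Real.cos (2 * x)) / 3) ∧
    (2 + Real.cos (2 * x)) / 3 = (2 * Real.cos x ^ 2 + 1) / 3 := by
  refine ⟨?_, by rw [Real.cos_two_mul]; ring⟩
  have hparseval := hasSum_sq_fourierCoeffOn zero_lt_one (memLp_expSelfConv (2 * x))
  rw [sub_zero, inv_one, one_smul, integral_norm_sq_expSelfConv] at hparseval
  have hcoeff (n : ℤ) : ‖fourierCoeffOn zero_lt_one (expSelfConv (2 * x)) n‖ ^ 2
      = Real.sin x ^ 4 / (x + ((-n : ℤ) : ℝ) * π) ^ 4 := by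
    rw [fourierCoeffOn_expSelfConv _ _ fun h ↦ hx n (by linarith),
      norm_sq_div_sq_cexp_I_mul_sub_one]
    push_cast
    ring_nf
  simp_rw [hcoeff] at hparseval
  exact (Equiv.neg ℤ).hasSum_iff.mp hparseval
end

section
/- For every real x with x ∉ 2πℤ, the family ( sin⁴(x) / (x + 2kπ)⁴ )_{k∈ℤ} is summable and ∑_{k∈ℤ} sin⁴(x)/(x+2kπ)⁴ = cos⁴(x/2) · (2 + cos(x))/3. -/
/-!
With `w = e^{ix}`, the function `g(t) = e^{ixt} (t + (1 - t) w)` on `[0, 1]` is the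
`1`-periodization of the self-convolution of `e^{ixt} 𝟙_{[0,1)}(t)`, so its `n`-th Fourier
coefficient is the square of `(w - 1) / (i (x - 2πn))`. Parseval's identity then gives
`∑ₙ |w - 1|⁴ / (x - 2πn)⁴ = ∫₀¹ |g|² = (2 + cos x) / 3`, and
`sin⁴ x = cos⁴ (x/2) · |w - 1|⁴` because `|w - 1| = 2 |sin (x/2)|`.
-/

open Real MeasureTheory Set
open Complex (I)
open scoped Complex

noncomputable def expTent (x t : ℝ) : ℂ := cexp (x * t * I) * (t + (1 - t) * cexp (x * I))

theorem continuous_expTent (x : ℝ) : Continuous (expTent x) := by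
  unfold expTent; fun_prop

theorem integral_expTent {a : ℝ} (ha : a ≠ 0) :
    ∫ t in (0:ℝ)..1, expTent a t = -(cexp (a * I) - 1) ^ 2 / a ^ 2 := by
  set w := cexp (a * I)
  have ha' : (a : ℂ) ≠ 0 := mod_cast ha
  have hderiv : ∀ t : ℝ, HasDerivAt
      (fun t : ℝ => cexp (a * t * I) * (1 - w - a * w * I + (w - 1) * (a * t * I)) / a ^ 2)
      (expTent a t) t := by
    intro t
    have hlin : HasDerivAt (fun t : ℝ => (a * t * I : ℂ)) (a * I) t := by
      simpa using ((hasDerivAt_id t).ofReal_comp.const_mul (a : ℂ)).mul_const I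
    refine ((hlin.cexp.mul ((hlin.const_mul (w - 1)).const_add (1 - w - a * w * I))).div_const
      ((a : ℂ) ^ 2)).congr_deriv ?_
    rw [expTent]
    field_simp
    linear_combination (a * t * (w - 1) - a * w) * Complex.I_sq
  rw [intervalIntegral.integral_eq_sub_of_hasDerivAt (fun t _ => hderiv t)
    ((continuous_expTent a).intervalIntegrable _ _)]
  simp only [Complex.ofReal_one, mul_one, Complex.ofReal_zero, mul_zero, zero_mul,
    Complex.exp_zero, add_zero, one_mul]
  ring

theorem exp_sub_two_pi_mul_intCast_mul_I (x : ℝ) (n : ℤ) :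
    cexp ((x - 2 * π * n : ℝ) * I) = cexp (x * I) :=
  Complex.exp_eq_exp_iff_exists_int.mpr ⟨-n, by push_cast; ring⟩

theorem fourierCoeffOn_expTent {x : ℝ} {n : ℤ} (hn : x - 2 * π * n ≠ 0) :
    fourierCoeffOn zero_lt_one (expTent x) n = -(cexp (x * I) - 1) ^ 2 / (x - 2 * π * n) ^ 2 := by
  have hmodulate : ∀ t : ℝ, fourier (-n) (t : AddCircle (1 - 0 : ℝ)) • expTent x t
      = expTent (x - 2 * π * n) t := by
    intro t
    rw [fourier_coe_apply, smul_eq_mul, expTent, expTent, exp_sub_two_pi_mul_intCast_mul_I,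
      ← mul_assoc, ← Complex.exp_add]
    push_cast
    ring_nf
  simp only [fourierCoeffOn_eq_integral, hmodulate, integral_expTent hn,
    exp_sub_two_pi_mul_intCast_mul_I]
  simp

theorem norm_expTent_sq (x t : ℝ) :
    ‖expTent x t‖ ^ 2 = t ^ 2 + (1 - t) ^ 2 + 2 * t * (1 - t) * cos x := by
  have hunit : ‖cexp (x * t * I)‖ = 1 := mod_cast Complex.norm_exp_ofReal_mul_I (x * t)
  have hrect : (t : ℂ) + (1 - t) * cexp (x * I)
      = ((t + (1 - t) * cos x : ℝ) : ℂ) + ((1 - t) * sin x : ℝ) * I := by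
    rw [Complex.exp_mul_I]; push_cast; ring
  rw [expTent, norm_mul, hunit, one_mul, hrect, Complex.sq_norm, Complex.normSq_add_mul_I]
  linear_combination (1 - t) ^ 2 * sin_sq_add_cos_sq x

theorem integral_norm_expTent_sq (x : ℝ) :
    ∫ t in (0:ℝ)..1, ‖expTent x t‖ ^ 2 = (2 + cos x) / 3 := by
  have hpoly : ∀ t : ℝ, ‖expTent x t‖ ^ 2 = 1 + 2 * (cos x - 1) * t - 2 * (cos x - 1) * t ^ 2 :=
    fun t => by rw [norm_expTent_sq]; ring
  simp only [hpoly]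
  rw [intervalIntegral.integral_sub, intervalIntegral.integral_add,
    intervalIntegral.integral_const_mul, intervalIntegral.integral_const_mul]
  · norm_num
    ring
  all_goals exact Continuous.intervalIntegrable (by fun_prop) _ _

theorem norm_expTent_le_one {x t : ℝ} (ht : t ∈ Icc (0:ℝ) 1) : ‖expTent x t‖ ≤ 1 := by
  refine (pow_le_one_iff_of_nonneg (norm_nonneg _) two_ne_zero).mp ?_
  rw [norm_expTent_sq]
  nlinarith [mul_nonneg ht.1 (sub_nonneg.mpr ht.2), cos_le_one x]

theorem memLp_expTent (x : ℝ) : MemLp (expTent x) 2 (volume.restrict (Ioc 0 1)) :=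
  .of_bound (continuous_expTent x).aestronglyMeasurable 1
    (ae_restrict_of_forall_mem measurableSet_Ioc fun _ ht =>
      norm_expTent_le_one (Ioc_subset_Icc_self ht))

theorem hasSum_two_mul_sin_half_pow_four_div {x : ℝ} (hx : ∀ n : ℤ, x - 2 * π * n ≠ 0) :
    HasSum (fun n : ℤ => (2 * sin (x / 2)) ^ 4 / (x - 2 * π * n) ^ 4) ((2 + cos x) / 3) := by
  convert hasSum_sq_fourierCoeffOn zero_lt_one (memLp_expTent x) using 1
  · ext n
    have hcast : (x : ℂ) - 2 * π * n = ((x - 2 * π * n : ℝ) : ℂ) := by push_cast; ring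
    rw [fourierCoeffOn_expTent (hx n), norm_div, norm_neg, norm_pow, norm_pow, mul_comm (x : ℂ),
      Complex.norm_exp_I_mul_ofReal_sub_one, hcast, Complex.norm_real, Real.norm_eq_abs,
      Real.norm_eq_abs, sq_abs, sq_abs, div_pow, ← pow_mul, ← pow_mul]
  · rw [integral_norm_expTent_sq]
    simp

/-- equation (71): for `x ∉ 2πℤ`,
`∑_{k∈ℤ} sin⁴(x)/(x+2kπ)⁴ = cos⁴(x/2)·(2 + cos(x))/3`. -/
theorem sum_sin_pow_four_div_shifted_two_pi (x : ℝ)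
    (hx : ∀ k : ℤ, x ≠ 2 * (k : ℝ) * Real.pi) :
    HasSum (fun k : ℤ => Real.sin x ^ 4 / (x + 2 * (k : ℝ) * Real.pi) ^ 4)
      (Real.cos (x / 2) ^ 4 * ((2 + Real.cos x) / 3)) := by
  have hx' : ∀ n : ℤ, x - 2 * π * n ≠ 0 :=
    fun n => sub_ne_zero.mpr fun h => hx n (by rw [h]; ring)
  have hsin : sin x = 2 * sin (x / 2) * cos (x / 2) := by
    rw [← sin_two_mul]; congr 1; ring
  have hterm : ∀ k : ℤ, sin x ^ 4 / (x + 2 * (k : ℝ) * π) ^ 4 =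
      cos (x / 2) ^ 4 * ((2 * sin (x / 2)) ^ 4 / (x - 2 * π * ((-k : ℤ) : ℝ)) ^ 4) := by
    intro k
    rw [hsin]
    push_cast
    ring
  simp_rw [hterm]
  exact ((Equiv.neg ℤ).hasSum_iff.mpr (hasSum_two_mul_sin_half_pow_four_div hx')).mul_left _
end

section
/- Define P(w) = cos²(w/4) and E(w) = (2 + cos(w/2))/3 for w ∈ ℝ. Then for every w ∈ ℝ: (i) P(w+2π) E(w+2π) + P(w) E(w) = (2 + cos²(w/2))/3; and (ii) e^{-iw/2} · E(w+2π) · P(w+2π) / ( P(w+2π) E(w+2π) + P(w) E(w) ) = e^{-iw/2} · sin²(w/4) · (1 + 2sin²(w/4)) / (2 + cos²(w/2)). -/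
/-! Everything is a polynomial in `s = sin²(w/4)`: since `cos(w/2) = 1 - 2s` and the shift by `2π`
turns `cos²(w/4)` into `s` and `cos(w/2)` into `-cos(w/2)`, one gets `P(w+2π)E(w+2π) = s(1+2s)/3`
and `P(w)E(w) = (1-s)(3-2s)/3`, whose sum is `(3 - 4s + 4s²)/3 = (2 + (1-2s)²)/3`. -/

open Real

namespace SplineOrderTwo

noncomputable def twoScaleSymbol (w : ℝ) : ℝ := cos (w / 4) ^ 2

noncomputable def autocorrSymbol (w : ℝ) : ℝ := (2 + cos (w / 2)) / 3

theorem cos_half_eq_one_sub_two_mul_sin_sq_quarter (w : ℝ) :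
    cos (w / 2) = 1 - 2 * sin (w / 4) ^ 2 := by
  rw [← cos_two_mul_eq_one_sub]
  ring_nf

theorem twoScaleSymbol_add_two_pi (w : ℝ) : twoScaleSymbol (w + 2 * π) = sin (w / 4) ^ 2 := by
  rw [twoScaleSymbol, show (w + 2 * π) / 4 = w / 4 + π / 2 by ring, cos_add_pi_div_two, neg_sq]

theorem autocorrSymbol_add_two_pi (w : ℝ) :
    autocorrSymbol (w + 2 * π) = (2 - cos (w / 2)) / 3 := by
  rw [autocorrSymbol, show (w + 2 * π) / 2 = w / 2 + π by ring, cos_add_pi, ← sub_eq_add_neg]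

theorem twoScaleSymbol_mul_autocorrSymbol_add_two_pi (w : ℝ) :
    twoScaleSymbol (w + 2 * π) * autocorrSymbol (w + 2 * π) =
      sin (w / 4) ^ 2 * (1 + 2 * sin (w / 4) ^ 2) / 3 := by
  rw [twoScaleSymbol_add_two_pi, autocorrSymbol_add_two_pi,
    cos_half_eq_one_sub_two_mul_sin_sq_quarter]
  ring

theorem twoScaleSymbol_mul_autocorrSymbol (w : ℝ) :
    twoScaleSymbol w * autocorrSymbol w =
      (1 - sin (w / 4) ^ 2) * (3 - 2 * sin (w / 4) ^ 2) / 3 := by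
  rw [twoScaleSymbol, autocorrSymbol, cos_sq', cos_half_eq_one_sub_two_mul_sin_sq_quarter]
  ring

theorem twoScaleSymbol_mul_autocorrSymbol_periodized (w : ℝ) :
    twoScaleSymbol (w + 2 * π) * autocorrSymbol (w + 2 * π) +
      twoScaleSymbol w * autocorrSymbol w = (2 + cos (w / 2) ^ 2) / 3 := by
  rw [twoScaleSymbol_mul_autocorrSymbol_add_two_pi, twoScaleSymbol_mul_autocorrSymbol,
    cos_half_eq_one_sub_two_mul_sin_sq_quarter]
  ring

end SplineOrderTwo

open SplineOrderTwo

/-- equations (60)–(61) for the order-2 spline: with `P(w) = cos²(w/4)` and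
`E(w) = (2 + cos(w/2))/3`, one has (i) `P(w+2π)E(w+2π) + P(w)E(w) = (2 + cos²(w/2))/3` and
(ii) `e^{-iw/2}·E(w+2π)·P(w+2π)/(P(w+2π)E(w+2π) + P(w)E(w))
  = e^{-iw/2}·sin²(w/4)·(1 + 2sin²(w/4))/(2 + cos²(w/2))`. -/
theorem spline_order_two_symbol_computation (P E : ℝ → ℝ)
    (hP : ∀ w : ℝ, P w = Real.cos (w / 4) ^ 2)
    (hE : ∀ w : ℝ, E w = (2 + Real.cos (w / 2)) / 3) :
    ∀ w : ℝ,
      P (w + 2 * Real.pi) * E (w + 2 * Real.pi) + P w * E w =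
        (2 + Real.cos (w / 2) ^ 2) / 3 ∧
      Complex.exp (-Complex.I * (w : ℂ) / 2) * (E (w + 2 * Real.pi) : ℂ) *
          (P (w + 2 * Real.pi) : ℂ) /
          ((P (w + 2 * Real.pi) * E (w + 2 * Real.pi) + P w * E w : ℝ) : ℂ) =
        Complex.exp (-Complex.I * (w : ℂ) / 2) * ((Real.sin (w / 4) ^ 2 : ℝ) : ℂ) *
          ((1 + 2 * Real.sin (w / 4) ^ 2 : ℝ) : ℂ) /
          ((2 + Real.cos (w / 2) ^ 2 : ℝ) : ℂ) := by
  obtain rfl : P = twoScaleSymbol := funext hP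
  obtain rfl : E = autocorrSymbol := funext hE
  intro w
  refine ⟨twoScaleSymbol_mul_autocorrSymbol_periodized w, ?_⟩
  have hden : (2 + cos (w / 2) ^ 2 : ℂ) ≠ 0 := by
    exact_mod_cast (by positivity : (0 : ℝ) < 2 + cos (w / 2) ^ 2).ne'
  have hnum : (autocorrSymbol (w + 2 * π) : ℂ) * twoScaleSymbol (w + 2 * π) =
      ((sin (w / 4) ^ 2 * (1 + 2 * sin (w / 4) ^ 2) / 3 : ℝ) : ℂ) := by
    rw [← Complex.ofReal_mul, mul_comm, twoScaleSymbol_mul_autocorrSymbol_add_two_pi]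
  rw [twoScaleSymbol_mul_autocorrSymbol_periodized, mul_assoc, hnum]
  push_cast
  field_simp
end

section
/- Let φ : ℝ → ℂ and φ̂ : ℝ → ℂ be functions and (q_n)_{n∈ℤ} complex numbers with ∑_{n∈ℤ} |q_n| < ∞. Assume that for every w ∈ ℝ the families (φ(k) e^{-iwk})_{k∈ℤ} and (φ̂(w+2kπ))_{k∈ℤ} are summable with ∑_{k∈ℤ} φ(k) e^{-iwk} = ∑_{k∈ℤ} φ̂(w+2kπ). Define Q(w) = (1/2) ∑_{n∈ℤ} q_n e^{-iwn/2} and ψ(k/2) = ∑_{n∈ℤ} q_n φ(k−n) for k ∈ ℤ. Then for every w ∈ ℝ the family (ψ(k/2) e^{-iwk/2})_{k∈ℤ} is summable and (1/2) ∑_{k∈ℤ} ψ(k/2) e^{-iwk/2} = Q(w) · ∑_{k∈ℤ} φ̂(w/2 + 2kπ). -/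
/-! The samples `ψ(k/2)` are the discrete convolution `q ⋆ φ` of two absolutely summable
sequences on `ℤ` (the absolute summability of `φ(k)` is the Poisson hypothesis at `w = 0`).
Twisting by the character `k ↦ e^{-iwk/2}` commutes with convolution, and the sum of a
convolution of absolutely summable sequences is the product of their sums; so the Fourier
series of the samples is `2 Q(w)` times `∑_k φ(k) e^{-iwk/2}`, which the Poisson identity at
`w / 2` rewrites as a periodization of `φ̂`. -/

theorem hasSum_tsum_mul_sub_of_summable_norm {G R : Type*} [AddCommGroup G] [NormedRing R]
    [CompleteSpace R] {f g : G → R} (hf : Summable fun n => ‖f n‖)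
    (hg : Summable fun n => ‖g n‖) :
    HasSum (fun k => ∑' n, f n * g (k - n)) ((∑' n, f n) * ∑' n, g n) := by
  let σ : G × G ≃ G × G :=
    { toFun := fun p => (p.2, p.1 - p.2)
      invFun := fun p => (p.1 + p.2, p.1)
      left_inv := fun p => by simp
      right_inv := fun p => by simp }
  have hσ : Summable fun p => f (σ p).1 * g (σ p).2 :=
    (hf.mul_norm hg).of_norm.comp_injective σ.injective
  rw [tsum_mul_tsum_of_summable_norm hf hg, ← σ.tsum_eq]
  exact hσ.hasSum.prod_fiberwise fun k => (hσ.prod_factor k).hasSum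

theorem hasSum_tsum_mul_sub_mul_of_map_add {G 𝕜 : Type*} [AddCommGroup G] [NormedField 𝕜]
    [CompleteSpace 𝕜] {f g χ : G → 𝕜} (hχ : ∀ m n, χ (m + n) = χ m * χ n)
    (hf : Summable fun n => ‖f n * χ n‖) (hg : Summable fun n => ‖g n * χ n‖) :
    HasSum (fun k => (∑' n, f n * g (k - n)) * χ k)
      ((∑' n, f n * χ n) * ∑' n, g n * χ n) := by
  convert hasSum_tsum_mul_sub_of_summable_norm hf hg using 2 with k
  rw [← tsum_mul_right]
  refine tsum_congr fun n => ?_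
  rw [← add_sub_cancel n k, hχ, add_sub_cancel_left]
  ring

theorem wavelet_half_integer_poisson_general (φ φhat : ℝ → ℂ) (q : ℤ → ℂ)
    (hq : Summable fun n : ℤ => ‖q n‖)
    (hφsum : ∀ w : ℝ,
      Summable (fun k : ℤ => φ (k : ℝ) * Complex.exp (-Complex.I * (w : ℂ) * (k : ℂ))))
    (hpoisson : ∀ w : ℝ,
      ∑' k : ℤ, φ (k : ℝ) * Complex.exp (-Complex.I * (w : ℂ) * (k : ℂ)) =
        ∑' k : ℤ, φhat (w + 2 * (k : ℝ) * Real.pi))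
    (Q : ℝ → ℂ)
    (hQ : ∀ w : ℝ,
      Q w = (1 / 2 : ℂ) * ∑' n : ℤ, q n * Complex.exp (-Complex.I * (w : ℂ) * (n : ℂ) / 2))
    (ψhalf : ℤ → ℂ)
    (hψ : ∀ k : ℤ, ψhalf k = ∑' n : ℤ, q n * φ ((k : ℝ) - (n : ℝ))) :
    ∀ w : ℝ,
      Summable (fun k : ℤ => ψhalf k * Complex.exp (-Complex.I * (w : ℂ) * (k : ℂ) / 2)) ∧
      (1 / 2 : ℂ) * ∑' k : ℤ, ψhalf k * Complex.exp (-Complex.I * (w : ℂ) * (k : ℂ) / 2) =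
        Q w * ∑' k : ℤ, φhat (w / 2 + 2 * (k : ℝ) * Real.pi) := by
  intro w
  set e : ℤ → ℂ := fun k => Complex.exp (-Complex.I * (w : ℂ) * (k : ℂ) / 2)
  have he_half (k : ℤ) : Complex.exp (-Complex.I * ((w / 2 : ℝ) : ℂ) * (k : ℂ)) = e k := by
    congr 1; push_cast; ring
  have he_norm (k : ℤ) : ‖e k‖ = 1 := by simp [e, Complex.norm_exp]
  have he_add (m n : ℤ) : e (m + n) = e m * e n := by
    simp only [e, ← Complex.exp_add]; congr 1; push_cast; ring
  have hφ : Summable fun k : ℤ => ‖φ k * e k‖ := by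
    simpa [norm_mul, he_norm, summable_norm_iff] using hφsum 0
  have hqe : Summable fun n => ‖q n * e n‖ := by simpa [norm_mul, he_norm] using hq
  have key := hasSum_tsum_mul_sub_mul_of_map_add he_add hqe hφ
  simp only [Int.cast_sub, ← hψ] at key
  refine ⟨key.summable, ?_⟩
  rw [key.tsum_eq, hQ w, ← hpoisson (w / 2)]
  simp only [he_half]
  ring

/-- equations (D11)–(D13), Proposition 3(b): if `(q_n)` is absolutely summable,
and for every `w` the Poisson identity `∑_k φ(k) e^{-iwk} = ∑_k φ̂(w+2kπ)` holds (both families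
being summable), then with `Q(w) = (1/2) ∑_n q_n e^{-iwn/2}` and
`ψ(k/2) = ∑_n q_n φ(k−n)`, the family `(ψ(k/2) e^{-iwk/2})_k` is summable and
`(1/2) ∑_k ψ(k/2) e^{-iwk/2} = Q(w) · ∑_k φ̂(w/2 + 2kπ)`. -/
theorem wavelet_half_integer_poisson (φ φhat : ℝ → ℂ) (q : ℤ → ℂ)
    (hq : Summable fun n : ℤ => ‖q n‖)
    (hφsum : ∀ w : ℝ,
      Summable (fun k : ℤ => φ (k : ℝ) * Complex.exp (-Complex.I * (w : ℂ) * (k : ℂ))))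
    (hφhatsum : ∀ w : ℝ, Summable (fun k : ℤ => φhat (w + 2 * (k : ℝ) * Real.pi)))
    (hpoisson : ∀ w : ℝ,
      ∑' k : ℤ, φ (k : ℝ) * Complex.exp (-Complex.I * (w : ℂ) * (k : ℂ)) =
        ∑' k : ℤ, φhat (w + 2 * (k : ℝ) * Real.pi))
    (Q : ℝ → ℂ)
    (hQ : ∀ w : ℝ,
      Q w = (1 / 2 : ℂ) * ∑' n : ℤ, q n * Complex.exp (-Complex.I * (w : ℂ) * (n : ℂ) / 2))
    (ψhalf : ℤ → ℂ)
    (hψ : ∀ k : ℤ, ψhalf k = ∑' n : ℤ, q n * φ ((k : ℝ) - (n : ℝ))) :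
    ∀ w : ℝ,
      Summable (fun k : ℤ => ψhalf k * Complex.exp (-Complex.I * (w : ℂ) * (k : ℂ) / 2)) ∧
      (1 / 2 : ℂ) * ∑' k : ℤ, ψhalf k * Complex.exp (-Complex.I * (w : ℂ) * (k : ℂ) / 2) =
        Q w * ∑' k : ℤ, φhat (w / 2 + 2 * (k : ℝ) * Real.pi) :=
  wavelet_half_integer_poisson_general φ φhat q hq hφsum hpoisson Q hQ ψhalf hψ
end
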